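/- Let V be a valuation domain with field of fractions K, maximal ideal 𝔪, valuation v, and value group Γ, and suppose the residue field V/𝔪 is infinite. Let φ_1, …, φ_n, ψ_1, …, ψ_m ∈ IntR(V) be nonzero integer-valued rational functions such that (φ_1, …, φ_n) = (ψ_1, …, ψ_m) as ideals of IntR(V). Then min{minval_{φ_1}(γ), …, minval_{φ_n}(γ)} = min{minval_{ψ_1}(γ), …, minval_{ψ_m}(γ)} for every γ ∈ Γ with γ ≥ 0. -/

import Mathlib

set_option maxHeartbeats 1000000
set_option synthInstance.maxHeartbeats 400000

open Polynomial

/-- An (additive) valuation `v : K → Γ ∪ {∞}` on a field `K` with value group `Γ`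
(surjectivity onto `Γ` makes `Γ` the value group). -/
structure AddVal (K : Type*) [Field K] (Γ : Type*) [AddCommGroup Γ] [LinearOrder Γ] [IsOrderedAddMonoid Γ] where
  v : K → WithTop Γ
  v_eq_top_iff : ∀ x : K, v x = ⊤ ↔ x = 0
  v_mul : ∀ x y : K, v (x * y) = v x + v y
  v_one : v 1 = 0
  v_min_le_add : ∀ x y : K, min (v x) (v y) ≤ v (x + y)
  v_surj : ∀ γ : Γ, ∃ x : K, v x = (γ : WithTop Γ)

variable {K : Type*} [Field K] {Γ : Type*} [AddCommGroup Γ] [LinearOrder Γ] [IsOrderedAddMonoid Γ]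

/-- The minimum valuation function of a nonzero polynomial:
`minval_f(γ) = min {v(a_i) + i·γ : 0 ≤ i ≤ deg f}`. -/
noncomputable def minval (w : AddVal K Γ) (f : Polynomial K) (γ : Γ) : WithTop Γ :=
  (Finset.range (f.natDegree + 1)).inf fun i => w.v (f.coeff i) + ((i • γ : Γ) : WithTop Γ)

/-- The minimum valuation function of a nonzero rational function `φ = f/g`:
`minval_φ = minval_f - minval_g` (independent of the representation `f/g`). -/
noncomputable def minvalRat (w : AddVal K Γ) (φ : RatFunc K) (γ : Γ) : Γ :=
  WithTop.untopD 0 (minval w φ.num γ) - WithTop.untopD 0 (minval w φ.denom γ)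

/-- `φ ∈ IntR(V)` for the valuation subring `V`. -/
def IntegerValuedS (V : Subring K) (φ : RatFunc K) : Prop :=
  ∀ a : K, a ∈ V → φ.denom.eval a ≠ 0 ∧ φ.num.eval a / φ.denom.eval a ∈ V

variable (w : AddVal K Γ)

lemma v_zero : w.v 0 = ⊤ := (w.v_eq_top_iff 0).2 rfl

lemma v_ne_top {x : K} (hx : x ≠ 0) : w.v x ≠ ⊤ := fun h => hx ((w.v_eq_top_iff x).1 h)

lemma v_neg (x : K) : w.v (-x) = w.v x := by
  have h1 : w.v (-1 : K) = 0 := by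
    have h := w.v_mul (-1) (-1)
    rw [neg_mul_neg, one_mul, w.v_one] at h
    cases hv : w.v (-1 : K) with
    | top => rw [hv] at h; simp at h
    | coe b =>
      rw [hv] at h
      have hb : b + b = 0 := by exact_mod_cast h.symm
      have hb0 : b = 0 := by
        rcases lt_trichotomy b 0 with h' | h' | h'
        · exact absurd hb (by simpa using (add_lt_add h' h').ne)
        · exact h'
        · exact absurd hb (by simpa using (add_lt_add h' h').ne')
      simp [hb0]
  have := w.v_mul (-1) x
  rwa [neg_one_mul, h1, zero_add] at this

lemma v_add_eq_left {x y : K} (h : w.v x < w.v y) : w.v (x + y) = w.v x := by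
  refine le_antisymm ?_ ?_
  · by_contra hlt
    push_neg at hlt
    have h2 : w.v x < min (w.v (x + y)) (w.v (-y)) := by
      rw [v_neg]; exact lt_min hlt h
    have h3 := w.v_min_le_add (x + y) (-y)
    rw [add_neg_cancel_right] at h3
    exact absurd (lt_of_lt_of_le h2 h3) (lt_irrefl _)
  · have := w.v_min_le_add x y
    rwa [min_eq_left h.le] at this

lemma v_pow (x : K) (i : ℕ) : w.v (x ^ i) = i • w.v x := by
  induction i with
  | zero => simpa using w.v_one
  | succ k ih => rw [pow_succ, w.v_mul, ih, succ_nsmul]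

lemma v_div_add {x y : K} (hy : y ≠ 0) : w.v (x / y) + w.v y = w.v x := by
  rw [← w.v_mul, div_mul_cancel₀ _ hy]

lemma v_sum_ge {ι : Type*} (s : Finset ι) (F : ι → K) :
    (s.inf fun i => w.v (F i)) ≤ w.v (∑ i ∈ s, F i) := by
  classical
  induction s using Finset.cons_induction with
  | empty => simp [v_zero w]
  | cons a s ha ih =>
    rw [Finset.sum_cons, Finset.inf_cons]
    refine le_trans ?_ (w.v_min_le_add _ _)
    exact min_le_min le_rfl ih

lemma v_sum_eq_of_strict {ι : Type*} (s : Finset ι) (F : ι → K) (i₀ : ι) (hi₀ : i₀ ∈ s)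
    (hne : w.v (F i₀) ≠ ⊤)
    (h : ∀ i ∈ s, i ≠ i₀ → w.v (F i₀) < w.v (F i)) :
    w.v (∑ i ∈ s, F i) = w.v (F i₀) := by
  classical
  rw [← Finset.add_sum_erase s F hi₀]
  refine v_add_eq_left w ?_
  refine lt_of_lt_of_le ?_ (v_sum_ge w _ _)
  rw [Finset.lt_inf_iff (lt_top_iff_ne_top.2 hne)]
  intro i hi
  exact h i (Finset.mem_of_mem_erase hi) (Finset.ne_of_mem_erase hi)

lemma minval_le (f : Polynomial K) (γ : Γ) (i : ℕ) :
    minval w f γ ≤ w.v (f.coeff i) + ((i • γ : Γ) : WithTop Γ) := by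
  by_cases hi : i ≤ f.natDegree
  · exact Finset.inf_le (Finset.mem_range.2 (Nat.lt_succ_of_le hi))
  · rw [f.coeff_eq_zero_of_natDegree_lt (lt_of_not_ge hi), v_zero, top_add]
    exact le_top

lemma minval_ne_top {f : Polynomial K} (hf : f ≠ 0) (γ : Γ) : minval w f γ ≠ ⊤ := by
  intro h
  have h1 := minval_le w f γ f.natDegree
  rw [h, top_le_iff, WithTop.add_eq_top] at h1
  rcases h1 with h1 | h1
  · exact v_ne_top w (Polynomial.coeff_ne_zero_of_eq_degree (Polynomial.degree_eq_natDegree hf)) h1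
  · exact WithTop.coe_ne_top h1

lemma coe_nsmul_add (i j : ℕ) (γ : Γ) :
    (((i + j) • γ : Γ) : WithTop Γ) = ((i • γ : Γ) : WithTop Γ) + ((j • γ : Γ) : WithTop Γ) := by
  rw [add_nsmul]; exact WithTop.coe_add _ _

lemma minval_exists (f : Polynomial K) (γ : Γ) :
    ∃ i, minval w f γ = w.v (f.coeff i) + ((i • γ : Γ) : WithTop Γ) := by
  obtain ⟨i, _, hi⟩ := Finset.exists_mem_eq_inf (Finset.range (f.natDegree + 1))
    ⟨0, Finset.mem_range.2 (Nat.succ_pos _)⟩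
    (fun i => w.v (f.coeff i) + ((i • γ : Γ) : WithTop Γ))
  exact ⟨i, hi⟩

lemma minval_mul {f g : Polynomial K} (hf : f ≠ 0) (hg : g ≠ 0) (γ : Γ) :
    minval w (f * g) γ = minval w f γ + minval w g γ := by
  classical
  have hexf := minval_exists w f γ
  have hexg := minval_exists w g γ
  set i₀ := Nat.find hexf with hi₀def
  set j₀ := Nat.find hexg with hj₀def
  have hPf : minval w f γ = w.v (f.coeff i₀) + ((i₀ • γ : Γ) : WithTop Γ) := Nat.find_spec hexf
  have hPg : minval w g γ = w.v (g.coeff j₀) + ((j₀ • γ : Γ) : WithTop Γ) := Nat.find_spec hexg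
  have hltf : ∀ i < i₀, minval w f γ < w.v (f.coeff i) + ((i • γ : Γ) : WithTop Γ) :=
    fun i hi => lt_of_le_of_ne (minval_le w f γ i) (Nat.find_min hexf hi)
  have hltg : ∀ j < j₀, minval w g γ < w.v (g.coeff j) + ((j • γ : Γ) : WithTop Γ) :=
    fun j hj => lt_of_le_of_ne (minval_le w g γ j) (Nat.find_min hexg hj)
  have hfc : w.v (f.coeff i₀) ≠ ⊤ := by
    intro h; exact minval_ne_top w hf γ (by rw [hPf, h, top_add])
  have hgc : w.v (g.coeff j₀) ≠ ⊤ := by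
    intro h; exact minval_ne_top w hg γ (by rw [hPg, h, top_add])
  refine le_antisymm ?_ ?_
  · -- ≤ : look at coefficient i₀ + j₀ of f * g
    have hcoeff : w.v ((f * g).coeff (i₀ + j₀)) = w.v (f.coeff i₀ * g.coeff j₀) := by
      rw [Polynomial.coeff_mul]
      refine v_sum_eq_of_strict w _ _ (i₀, j₀) (Finset.HasAntidiagonal.mem_antidiagonal.2 rfl) ?_ ?_
      · rw [w.v_mul]; exact WithTop.add_ne_top.2 ⟨hfc, hgc⟩
      · rintro ⟨i, j⟩ hij hne
        have hsum : i + j = i₀ + j₀ := Finset.HasAntidiagonal.mem_antidiagonal.1 hij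
        have hcase : i < i₀ ∨ j < j₀ := by
          by_contra hc
          push_neg at hc
          obtain ⟨h1, h2⟩ := hc
          have : i = i₀ ∧ j = j₀ := by omega
          exact hne (Prod.ext this.1 this.2)
        -- compare with the γ-shifted values, then cancel the common shift
        have key : w.v (f.coeff i₀) + ((i₀ • γ : Γ) : WithTop Γ)
            + (w.v (g.coeff j₀) + ((j₀ • γ : Γ) : WithTop Γ))
            < w.v (f.coeff i) + ((i • γ : Γ) : WithTop Γ)
            + (w.v (g.coeff j) + ((j • γ : Γ) : WithTop Γ)) := by
          rcases hcase with hlt | hlt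
          · calc w.v (f.coeff i₀) + ((i₀ • γ : Γ) : WithTop Γ)
                + (w.v (g.coeff j₀) + ((j₀ • γ : Γ) : WithTop Γ))
                < w.v (f.coeff i) + ((i • γ : Γ) : WithTop Γ)
                  + (w.v (g.coeff j₀) + ((j₀ • γ : Γ) : WithTop Γ)) := by
                  refine WithTop.add_lt_add_right ?_ (hPf ▸ hltf i hlt)
                  exact WithTop.add_ne_top.2 ⟨hgc, WithTop.coe_ne_top⟩
              _ ≤ _ := add_le_add_right (hPg ▸ minval_le w g γ j) _
          · calc w.v (f.coeff i₀) + ((i₀ • γ : Γ) : WithTop Γ)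
                + (w.v (g.coeff j₀) + ((j₀ • γ : Γ) : WithTop Γ))
                = w.v (g.coeff j₀) + ((j₀ • γ : Γ) : WithTop Γ)
                  + (w.v (f.coeff i₀) + ((i₀ • γ : Γ) : WithTop Γ)) := add_comm _ _
              _ < w.v (g.coeff j) + ((j • γ : Γ) : WithTop Γ)
                  + (w.v (f.coeff i₀) + ((i₀ • γ : Γ) : WithTop Γ)) := by
                  refine WithTop.add_lt_add_right ?_ (hPg ▸ hltg j hlt)
                  exact WithTop.add_ne_top.2 ⟨hfc, WithTop.coe_ne_top⟩
              _ ≤ w.v (g.coeff j) + ((j • γ : Γ) : WithTop Γ)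
                  + (w.v (f.coeff i) + ((i • γ : Γ) : WithTop Γ)) :=
                  add_le_add_right (hPf ▸ minval_le w f γ i) _
              _ = _ := add_comm _ _
        have key2 : w.v (f.coeff i₀) + w.v (g.coeff j₀) + (((i₀ + j₀) • γ : Γ) : WithTop Γ)
            < w.v (f.coeff i) + w.v (g.coeff j) + (((i + j) • γ : Γ) : WithTop Γ) := by
          rw [coe_nsmul_add, coe_nsmul_add,
            add_add_add_comm (w.v (f.coeff i₀)) (w.v (g.coeff j₀)),
            add_add_add_comm (w.v (f.coeff i)) (w.v (g.coeff j))]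
          exact key
        rw [w.v_mul, w.v_mul]
        rw [hsum] at key2
        exact lt_of_add_lt_add_right key2
    calc minval w (f * g) γ
        ≤ w.v ((f * g).coeff (i₀ + j₀)) + (((i₀ + j₀) • γ : Γ) : WithTop Γ) :=
          minval_le w (f * g) γ _
      _ = minval w f γ + minval w g γ := by
          rw [hcoeff, w.v_mul, coe_nsmul_add, add_add_add_comm, hPf, hPg]
  · -- ≥ : each coefficient of f * g has large value
    refine Finset.le_inf fun k _ => ?_
    obtain ⟨p, hp, hpe⟩ := Finset.exists_mem_eq_inf (Finset.HasAntidiagonal.antidiagonal k)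
      ⟨(0, k), by simp⟩ (fun p => w.v (f.coeff p.1 * g.coeff p.2))
    have hpk : p.1 + p.2 = k := Finset.HasAntidiagonal.mem_antidiagonal.1 hp
    calc minval w f γ + minval w g γ
        ≤ w.v (f.coeff p.1) + ((p.1 • γ : Γ) : WithTop Γ)
          + (w.v (g.coeff p.2) + ((p.2 • γ : Γ) : WithTop Γ)) :=
          add_le_add (minval_le w f γ p.1) (minval_le w g γ p.2)
      _ = w.v (f.coeff p.1 * g.coeff p.2) + (((p.1 + p.2) • γ : Γ) : WithTop Γ) := by
          rw [w.v_mul, coe_nsmul_add, add_add_add_comm]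
      _ ≤ w.v ((f * g).coeff k) + ((k • γ : Γ) : WithTop Γ) := by
          rw [hpk, Polynomial.coeff_mul]
          exact add_le_add_left (hpe ▸ v_sum_ge w _ _) _

lemma coe_nsmul' (i : ℕ) (γ : Γ) : ((i • γ : Γ) : WithTop Γ) = i • (γ : WithTop Γ) := by
  induction i with
  | zero => simp
  | succ k ih => rw [succ_nsmul, succ_nsmul, ← ih, WithTop.coe_add]

lemma v_div_nonneg {x y : K} (hy : y ≠ 0) (h : w.v y ≤ w.v x) : 0 ≤ w.v (x / y) := by
  by_contra hlt
  push_neg at hlt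
  have h2 : w.v (x / y) + w.v y < 0 + w.v y :=
    WithTop.add_lt_add_right (v_ne_top w hy) hlt
  rw [v_div_add w hy, zero_add] at h2
  exact absurd (lt_of_le_of_lt h h2) (lt_irrefl _)

lemma minval_le_v_eval (f : Polynomial K) (γ : Γ) (a : K) (ha : w.v a = (γ : WithTop Γ)) :
    minval w f γ ≤ w.v (f.eval a) := by
  rw [Polynomial.eval_eq_sum_range]
  refine le_trans (Finset.le_inf fun i _ => ?_) (v_sum_ge w _ _)
  rw [w.v_mul, v_pow, ha, ← coe_nsmul']
  exact minval_le w f γ i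

lemma minval_exists_mem (f : Polynomial K) (γ : Γ) :
    ∃ i ∈ Finset.range (f.natDegree + 1),
      minval w f γ = w.v (f.coeff i) + ((i • γ : Γ) : WithTop Γ) :=
  Finset.exists_mem_eq_inf _ ⟨0, Finset.mem_range.2 (Nat.succ_pos _)⟩ _

lemma exists_good_eval (V : Subring K) (hV : ∀ x : K, x ∈ V ↔ 0 ≤ w.v x)
    (m : Ideal ↥V) (hm : ∀ x : ↥V, x ∈ m ↔ 0 < w.v (x : K))
    (hinf : Infinite (↥V ⧸ m)) {f : Polynomial K} (hf : f ≠ 0) {γ : Γ} (hγ : 0 ≤ γ) :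
    ∃ a : K, a ∈ V ∧ w.v a = (γ : WithTop Γ) ∧ w.v (f.eval a) = minval w f γ := by
  classical
  obtain ⟨t, ht⟩ := w.v_surj γ
  obtain ⟨i₀, hi₀mem, hi₀⟩ := minval_exists_mem w f γ
  set d := f.coeff i₀ * t ^ i₀ with hddef
  have hvd : w.v d = minval w f γ := by
    rw [w.v_mul, v_pow, ht, ← coe_nsmul', hi₀]
  have hd0 : d ≠ 0 := by
    intro h
    exact minval_ne_top w hf γ (by rw [← hvd, h, v_zero])
  set b : ℕ → K := fun i => f.coeff i * t ^ i / d with hbdef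
  have hble : ∀ i, w.v d ≤ w.v (f.coeff i * t ^ i) := by
    intro i
    rw [hvd, w.v_mul, v_pow, ht, ← coe_nsmul']
    exact minval_le w f γ i
  have hbV : ∀ i, b i ∈ V := fun i => (hV _).2 (v_div_nonneg w hd0 (hble i))
  set B : ℕ → ↥V := fun i => ⟨b i, hbV i⟩ with hBdef
  have hB0 : B i₀ = 1 := by
    ext
    show b i₀ = 1
    rw [hbdef]
    exact div_self hd0
  have hprime : m.IsPrime := by
    constructor
    · intro h
      have h1 : (1 : ↥V) ∈ m := h ▸ Submodule.mem_top
      rw [hm] at h1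
      simp only [OneMemClass.coe_one, w.v_one] at h1
      exact lt_irrefl _ h1
    · intro x y hxy
      by_contra hc
      push_neg at hc
      obtain ⟨hx, hy⟩ := hc
      rw [hm] at hx hy hxy
      push_neg at hx hy
      have hxy' : w.v ((x : K) * (y : K)) ≤ 0 := by
        rw [w.v_mul]; exact add_nonpos hx hy
      rw [show ((x * y : ↥V) : K) = (x : K) * (y : K) from rfl] at hxy
      exact absurd hxy (not_lt.2 hxy')
  haveI := hprime
  haveI : IsDomain (↥V ⧸ m) := Ideal.Quotient.isDomain m
  set p : Polynomial (↥V ⧸ m) :=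
    ∑ i ∈ Finset.range (f.natDegree + 1), C (Ideal.Quotient.mk m (B i)) * X ^ i with hpdef
  have hpcoeff : p.coeff i₀ = 1 := by
    rw [hpdef, Polynomial.finset_sum_coeff]
    rw [Finset.sum_eq_single_of_mem i₀ hi₀mem]
    · rw [hB0, Polynomial.coeff_C_mul, Polynomial.coeff_X_pow, if_pos rfl, map_one, mul_one]
    · intro j _ hj
      simp [Polynomial.coeff_X_pow, Ne.symm hj]
  have hp0 : p ≠ 0 := fun h => by simp [h] at hpcoeff
  have hq0 : p * X ≠ 0 := mul_ne_zero hp0 Polynomial.X_ne_zero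
  obtain ⟨r, hr⟩ := Polynomial.exists_eval_ne_zero_of_natDegree_lt_card (p * X) hq0
    (lt_of_lt_of_le (Cardinal.nat_lt_aleph0 _) (Cardinal.aleph0_le_mk _))
  rw [Polynomial.eval_mul, Polynomial.eval_X] at hr
  have hpr : p.eval r ≠ 0 := left_ne_zero_of_mul hr
  have hr0 : r ≠ 0 := right_ne_zero_of_mul hr
  obtain ⟨u', hu'⟩ := Ideal.Quotient.mk_surjective r
  have hvu : w.v (u' : K) = 0 := by
    refine le_antisymm ?_ ((hV _).1 u'.2)
    by_contra hlt
    push_neg at hlt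
    have : u' ∈ m := (hm u').2 hlt
    exact hr0 (hu' ▸ (Ideal.Quotient.eq_zero_iff_mem).2 this)
  set s : ↥V := ∑ i ∈ Finset.range (f.natDegree + 1), B i * u' ^ i with hsdef
  have hmks : Ideal.Quotient.mk m s = p.eval r := by
    rw [hsdef, hpdef, map_sum]
    rw [Polynomial.eval_finset_sum]
    refine Finset.sum_congr rfl fun i _ => ?_
    rw [map_mul, map_pow, hu']
    simp
  have hvs : w.v (s : K) = 0 := by
    refine le_antisymm ?_ ((hV _).1 s.2)
    by_contra hlt
    push_neg at hlt
    have : s ∈ m := (hm s).2 hlt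
    exact (hmks ▸ hpr) ((Ideal.Quotient.eq_zero_iff_mem).2 this)
  refine ⟨t * (u' : K), ?_, ?_, ?_⟩
  · rw [hV, w.v_mul, ht, hvu, add_zero]
    exact_mod_cast hγ
  · rw [w.v_mul, ht, hvu, add_zero]
  · have heval : f.eval (t * (u' : K)) = d * (s : K) := by
      rw [Polynomial.eval_eq_sum_range]
      have hscast : ((s : ↥V) : K) = ∑ i ∈ Finset.range (f.natDegree + 1), b i * (u' : K) ^ i := by
        rw [hsdef]
        push_cast
        rfl
      rw [hscast, Finset.mul_sum]
      refine Finset.sum_congr rfl fun i _ => ?_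
      rw [hbdef]
      field_simp
      ring
    rw [heval, w.v_mul, hvs, add_zero, hvd]

lemma minval_add_ge (f g : Polynomial K) (γ : Γ) :
    min (minval w f γ) (minval w g γ) ≤ minval w (f + g) γ := by
  refine Finset.le_inf fun i _ => ?_
  calc min (minval w f γ) (minval w g γ)
      ≤ min (w.v (f.coeff i) + ((i • γ : Γ) : WithTop Γ))
          (w.v (g.coeff i) + ((i • γ : Γ) : WithTop Γ)) :=
        min_le_min (minval_le w f γ i) (minval_le w g γ i)
    _ = min (w.v (f.coeff i)) (w.v (g.coeff i)) + ((i • γ : Γ) : WithTop Γ) :=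
        (min_add_add_right _ _ _)
    _ ≤ w.v ((f + g).coeff i) + ((i • γ : Γ) : WithTop Γ) := by
        rw [Polynomial.coeff_add]
        exact add_le_add_left (w.v_min_le_add _ _) _

lemma minvalRat_add_denom {φ : RatFunc K} (hφ : φ ≠ 0) (γ : Γ) :
    ((minvalRat w φ γ : Γ) : WithTop Γ) + minval w φ.denom γ = minval w φ.num γ := by
  obtain ⟨a, ha⟩ := WithTop.ne_top_iff_exists.1 (minval_ne_top w (RatFunc.num_ne_zero hφ) γ)
  obtain ⟨c, hc⟩ := WithTop.ne_top_iff_exists.1 (minval_ne_top w (RatFunc.denom_ne_zero φ) γ)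
  rw [minvalRat, ← ha, ← hc, WithTop.untopD_coe, WithTop.untopD_coe, ← WithTop.coe_add,
    sub_add_cancel]

lemma minvalRat_spec {φ : RatFunc K} (hφ : φ ≠ 0) {f g : Polynomial K} (hg : g ≠ 0)
    (h : φ = algebraMap _ _ f / algebraMap _ _ g) (γ : Γ) :
    ((minvalRat w φ γ : Γ) : WithTop Γ) + minval w g γ = minval w f γ := by
  have hf : f ≠ 0 := by
    rintro rfl
    rw [map_zero, zero_div] at h
    exact hφ h
  have hcross : φ.num * g = f * φ.denom := (RatFunc.num_mul_eq_mul_denom_iff hg).2 h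
  have h1 : minval w (φ.num * g) γ = minval w (f * φ.denom) γ := by rw [hcross]
  rw [minval_mul w (RatFunc.num_ne_zero hφ) hg,
    minval_mul w hf (RatFunc.denom_ne_zero φ)] at h1
  have h2 := minvalRat_add_denom w hφ γ
  have h3 : ((minvalRat w φ γ : Γ) : WithTop Γ) + minval w g γ + minval w φ.denom γ
      = minval w f γ + minval w φ.denom γ := by
    rw [add_right_comm, h2, h1]
  exact WithTop.add_right_cancel (minval_ne_top w (RatFunc.denom_ne_zero φ) γ) h3

lemma minvalRat_mul {x y : RatFunc K} (hx : x ≠ 0) (hy : y ≠ 0) (γ : Γ) :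
    minvalRat w (x * y) γ = minvalRat w x γ + minvalRat w y γ := by
  have hdx := RatFunc.denom_ne_zero x
  have hdy := RatFunc.denom_ne_zero y
  have hnx := RatFunc.num_ne_zero hx
  have hny := RatFunc.num_ne_zero hy
  have hrep : x * y = algebraMap _ _ (x.num * y.num) / algebraMap _ _ (x.denom * y.denom) := by
    conv_lhs => rw [← RatFunc.num_div_denom x, ← RatFunc.num_div_denom y]
    rw [div_mul_div_comm, ← map_mul, ← map_mul]
  have h1 := minvalRat_spec w (mul_ne_zero hx hy) (mul_ne_zero hdx hdy) hrep γ
  rw [minval_mul w hnx hny, minval_mul w hdx hdy] at h1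
  have h2 := minvalRat_add_denom w hx γ
  have h3 := minvalRat_add_denom w hy γ
  rw [← h2, ← h3, add_add_add_comm] at h1
  have h4 := WithTop.add_right_cancel
    (WithTop.add_ne_top.2 ⟨minval_ne_top w hdx γ, minval_ne_top w hdy γ⟩) h1
  rw [← WithTop.coe_add] at h4
  exact WithTop.coe_injective h4

lemma minvalRat_add {x y : RatFunc K} (hx : x ≠ 0) (hy : y ≠ 0) (hxy : x + y ≠ 0) (γ : Γ) :
    min (minvalRat w x γ) (minvalRat w y γ) ≤ minvalRat w (x + y) γ := by
  have hdx := RatFunc.denom_ne_zero x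
  have hdy := RatFunc.denom_ne_zero y
  have hnx := RatFunc.num_ne_zero hx
  have hny := RatFunc.num_ne_zero hy
  have hrep : x + y
      = algebraMap _ _ (x.num * y.denom + y.num * x.denom)
        / algebraMap _ _ (x.denom * y.denom) := by
    conv_lhs => rw [← RatFunc.num_div_denom x, ← RatFunc.num_div_denom y]
    rw [div_add_div _ _ (RatFunc.algebraMap_ne_zero hdx) (RatFunc.algebraMap_ne_zero hdy),
      ← map_mul, ← map_mul, ← map_mul, ← map_add]
    congr 2
    ring
  have h1 := minvalRat_spec w hxy (mul_ne_zero hdx hdy) hrep γ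
  have h2 := minvalRat_add_denom w hx γ
  have h3 := minvalRat_add_denom w hy γ
  have hb : min (minval w (x.num * y.denom) γ) (minval w (y.num * x.denom) γ)
      ≤ minval w (x.num * y.denom + y.num * x.denom) γ := minval_add_ge w _ _ γ
  rw [minval_mul w hnx hdy, minval_mul w hny hdx, ← h2, ← h3] at hb
  have hb2 : min (((minvalRat w x γ : Γ) : WithTop Γ)) (((minvalRat w y γ : Γ) : WithTop Γ))
        + (minval w x.denom γ + minval w y.denom γ)
      ≤ ((minvalRat w (x + y) γ : Γ) : WithTop Γ) + (minval w x.denom γ + minval w y.denom γ) := by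
    rw [minval_mul w hdx hdy] at h1
    calc min (((minvalRat w x γ : Γ) : WithTop Γ)) (((minvalRat w y γ : Γ) : WithTop Γ))
          + (minval w x.denom γ + minval w y.denom γ)
        = min ((((minvalRat w x γ : Γ) : WithTop Γ) + minval w x.denom γ) + minval w y.denom γ)
            ((((minvalRat w y γ : Γ) : WithTop Γ) + minval w y.denom γ) + minval w x.denom γ) := by
          rw [← min_add_add_right]
          congr 1
          · rw [add_assoc]
          · rw [add_assoc, add_comm (minval w y.denom γ) (minval w x.denom γ)]
        _ ≤ minval w (x.num * y.denom + y.num * x.denom) γ := hb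
        _ = _ := h1.symm
  have hb3 := (WithTop.add_le_add_iff_right
    (WithTop.add_ne_top.2 ⟨minval_ne_top w hdx γ, minval_ne_top w hdy γ⟩)).1 hb2
  rw [← WithTop.coe_min] at hb3
  exact_mod_cast hb3

lemma eq_of_add_eq_of_le {a b c d : WithTop Γ} (h : a + b = c + d) (h1 : c ≤ a) (h2 : d ≤ b)
    (hd : d ≠ ⊤) : a = c := by
  refine le_antisymm ?_ h1
  by_contra hlt
  push_neg at hlt
  have hcd : c + d < a + b :=
    lt_of_lt_of_le (WithTop.add_lt_add_right hd hlt) (add_le_add_right h2 a)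
  rw [h] at hcd
  exact lt_irrefl _ hcd

lemma minvalRat_nonneg (V : Subring K) (hV : ∀ x : K, x ∈ V ↔ 0 ≤ w.v x)
    (m : Ideal ↥V) (hm : ∀ x : ↥V, x ∈ m ↔ 0 < w.v (x : K))
    (hinf : Infinite (↥V ⧸ m)) {c : RatFunc K} (hc : c ≠ 0) (hint : IntegerValuedS V c)
    {γ : Γ} (hγ : 0 ≤ γ) : 0 ≤ minvalRat w c γ := by
  have hnc := RatFunc.num_ne_zero hc
  have hdc := RatFunc.denom_ne_zero c
  obtain ⟨a, haV, hva, heval⟩ :=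
    exists_good_eval w V hV m hm hinf (mul_ne_zero hnc hdc) hγ
  rw [Polynomial.eval_mul, w.v_mul, minval_mul w hnc hdc] at heval
  have h1 := minval_le_v_eval w c.num γ a hva
  have h2 := minval_le_v_eval w c.denom γ a hva
  have e1 : w.v (c.num.eval a) = minval w c.num γ :=
    eq_of_add_eq_of_le heval h1 h2 (minval_ne_top w hdc γ)
  have e2 : w.v (c.denom.eval a) = minval w c.denom γ := by
    rw [add_comm (w.v (c.num.eval a)) _, add_comm (minval w c.num γ) _] at heval
    exact eq_of_add_eq_of_le heval h2 h1 (minval_ne_top w hnc γ)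
  obtain ⟨hda, hmem⟩ := hint a haV
  have hq : 0 ≤ w.v (c.num.eval a / c.denom.eval a) := (hV _).1 hmem
  have hle : w.v (c.denom.eval a) ≤ w.v (c.num.eval a) := by
    calc w.v (c.denom.eval a) = 0 + w.v (c.denom.eval a) := (zero_add _).symm
      _ ≤ w.v (c.num.eval a / c.denom.eval a) + w.v (c.denom.eval a) := add_le_add_left hq _
      _ = w.v (c.num.eval a) := v_div_add w hda
  rw [e1, e2] at hle
  obtain ⟨an, han⟩ := WithTop.ne_top_iff_exists.1 (minval_ne_top w hnc γ)
  obtain ⟨ad, had⟩ := WithTop.ne_top_iff_exists.1 (minval_ne_top w hdc γ)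
  rw [minvalRat, ← han, ← had, WithTop.untopD_coe, WithTop.untopD_coe, sub_nonneg]
  rw [← han, ← had, WithTop.coe_le_coe] at hle
  exact hle

open Classical in
noncomputable def Mfun (w : AddVal K Γ) (γ : Γ) (x : RatFunc K) : WithTop Γ :=
  if x = 0 then ⊤ else ((minvalRat w x γ : Γ) : WithTop Γ)

lemma Mfun_zero (γ : Γ) : Mfun w γ 0 = ⊤ := by simp [Mfun]

lemma Mfun_mul (γ : Γ) (x y : RatFunc K) : Mfun w γ (x * y) = Mfun w γ x + Mfun w γ y := by
  by_cases hx : x = 0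
  · simp [Mfun, hx]
  by_cases hy : y = 0
  · simp [Mfun, hy]
  simp only [Mfun, hx, hy, mul_ne_zero hx hy, if_neg, if_false]
  rw [minvalRat_mul w hx hy γ, WithTop.coe_add]

lemma Mfun_min_le_add (γ : Γ) (x y : RatFunc K) :
    min (Mfun w γ x) (Mfun w γ y) ≤ Mfun w γ (x + y) := by
  by_cases hxy : x + y = 0
  · simp [Mfun, hxy]
  by_cases hx : x = 0
  · subst hx; rw [zero_add]; exact min_le_right _ _
  by_cases hy : y = 0
  · subst hy; rw [add_zero]; exact min_le_left _ _
  simp only [Mfun, hx, hy, hxy, if_false]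
  rw [← WithTop.coe_min, WithTop.coe_le_coe]
  exact minvalRat_add w hx hy hxy γ

lemma Mfun_sum (γ : Γ) {ι : Type*} (s : Finset ι) (F : ι → RatFunc K) :
    (s.inf fun i => Mfun w γ (F i)) ≤ Mfun w γ (∑ i ∈ s, F i) := by
  classical
  induction s using Finset.cons_induction with
  | empty => simp [Mfun_zero]
  | cons a s ha ih =>
    rw [Finset.sum_cons, Finset.inf_cons]
    refine le_trans ?_ (Mfun_min_le_add w γ _ _)
    exact min_le_min le_rfl ih

lemma Mfun_nonneg (V : Subring K) (hV : ∀ x : K, x ∈ V ↔ 0 ≤ w.v x)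
    (m : Ideal ↥V) (hm : ∀ x : ↥V, x ∈ m ↔ 0 < w.v (x : K))
    (hinf : Infinite (↥V ⧸ m)) {c : RatFunc K} (hint : IntegerValuedS V c)
    {γ : Γ} (hγ : 0 ≤ γ) : 0 ≤ Mfun w γ c := by
  by_cases hc : c = 0
  · simp [hc, Mfun_zero]
  simp only [Mfun, hc, if_false]
  exact_mod_cast minvalRat_nonneg w V hV m hm hinf hc hint hγ

lemma coe_inf'_eq {ι : Type*} (s : Finset ι) (H : s.Nonempty) (f : ι → Γ) :
    ((s.inf' H f : Γ) : WithTop Γ) = s.inf fun i => ((f i : Γ) : WithTop Γ) := by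
  refine le_antisymm (Finset.le_inf fun i hi => WithTop.coe_le_coe.2 (Finset.inf'_le f hi)) ?_
  obtain ⟨i, hi, he⟩ := Finset.exists_mem_eq_inf' H f
  exact le_trans (Finset.inf_le hi) (le_of_eq (congrArg _ he.symm))

/-- Suppose the residue field `V/𝔪` is infinite.  If
`φ₁, …, φₙ, ψ₁, …, ψ_m ∈ IntR(V)` are nonzero and generate the same ideal of `IntR(V)`, then
`min_i minval_{φᵢ}(γ) = min_j minval_{ψⱼ}(γ)` for every `γ ∈ Γ` with `γ ≥ 0`. -/
theorem statement14 (K : Type*) [Field K] (Γ : Type*) [AddCommGroup Γ] [LinearOrder Γ] [IsOrderedAddMonoid Γ]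
    (w : AddVal K Γ)
    (V : Subring K) (hV : ∀ x : K, x ∈ V ↔ 0 ≤ w.v x)
    (m : Ideal ↥V) (hm : ∀ x : ↥V, x ∈ m ↔ 0 < w.v (x : K))
    (hinf : Infinite (↥V ⧸ m))
    (n mm : ℕ) (φ : Fin (n + 1) → RatFunc K) (ψ : Fin (mm + 1) → RatFunc K)
    (hφ0 : ∀ i, φ i ≠ 0) (hψ0 : ∀ j, ψ j ≠ 0)
    (hφint : ∀ i, IntegerValuedS V (φ i)) (hψint : ∀ j, IntegerValuedS V (ψ j))
    (h₁ : ∀ i, ∃ c : Fin (mm + 1) → RatFunc K,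
      (∀ j, IntegerValuedS V (c j)) ∧ φ i = ∑ j, c j * ψ j)
    (h₂ : ∀ j, ∃ c : Fin (n + 1) → RatFunc K,
      (∀ i, IntegerValuedS V (c i)) ∧ ψ j = ∑ i, c i * φ i) :
    ∀ γ : Γ, 0 ≤ γ →
      (Finset.univ.inf' Finset.univ_nonempty fun i => minvalRat w (φ i) γ)
        = Finset.univ.inf' Finset.univ_nonempty fun j => minvalRat w (ψ j) γ := by
  intro γ hγ
  have main : ∀ {k l : ℕ} (F : Fin (k + 1) → RatFunc K) (G : Fin (l + 1) → RatFunc K),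
      (∀ i, F i ≠ 0) → (∀ j, G j ≠ 0) →
      (∀ i, ∃ c : Fin (l + 1) → RatFunc K,
        (∀ j, IntegerValuedS V (c j)) ∧ F i = ∑ j, c j * G j) →
      (Finset.univ.inf' Finset.univ_nonempty fun j => minvalRat w (G j) γ)
        ≤ Finset.univ.inf' Finset.univ_nonempty fun i => minvalRat w (F i) γ := by
    intro k l F G hF0 hG0 hgen
    refine Finset.le_inf' _ _ fun i _ => ?_
    obtain ⟨c, hcint, hrep⟩ := hgen i
    rw [← WithTop.coe_le_coe]
    have hFi : ((minvalRat w (F i) γ : Γ) : WithTop Γ) = Mfun w γ (F i) := by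
      simp [Mfun, hF0 i]
    rw [hFi, hrep]
    refine le_trans ?_ (Mfun_sum w γ _ _)
    refine Finset.le_inf fun j _ => ?_
    rw [Mfun_mul]
    calc ((Finset.univ.inf' Finset.univ_nonempty fun j => minvalRat w (G j) γ : Γ) : WithTop Γ)
        ≤ ((minvalRat w (G j) γ : Γ) : WithTop Γ) :=
          WithTop.coe_le_coe.2 (Finset.inf'_le _ (Finset.mem_univ j))
      _ = Mfun w γ (G j) := by simp [Mfun, hG0 j]
      _ = 0 + Mfun w γ (G j) := (zero_add _).symm
      _ ≤ Mfun w γ (c j) + Mfun w γ (G j) :=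
          add_le_add_left (Mfun_nonneg w V hV m hm hinf (hcint j) hγ) _
  exact le_antisymm (main ψ φ hψ0 hφ0 h₂) (main φ ψ hφ0 hψ0 h₁)
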